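/- arXiv:2302.11160 — 2 statements merged into one kernel-verified Lean document; each statement's English description precedes it below -/
import Mathlib

section
/- Let Y be an integral quasi-affine scheme whose ring of global functions B = Γ(Y, O_Y) is Noetherian, and let j : Y → Spec B denote the canonical open immersion into the spectrum of its ring of global functions. Then the complement of j(Y) in Spec B has codimension at least two; that is, every prime ideal p of B that does not lie in the open set j(Y) has height at least 2. -/
/-!
Write `B = Γ(Y, ⊤)` and `U ⊆ Spec B` for the image of `Y`; since `Y ≅ U`, restriction
`B → Γ(Spec B, U)` is an isomorphism. If some `p ∉ U` had height `≤ 1`, then `p ≠ 0` (the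
generic point lies in `U`), so `p` is minimal over `(a)` for any `0 ≠ a ∈ p`, hence an associated
prime of `B/(a)`: `p = (a) : t` with `t ∉ (a)`. Every point of `U` misses `V(p)`, so the fraction
`t / a` is regular on `U`, hence lies in `B`, i.e. `t ∈ (a)`, a contradiction.
-/

open AlgebraicGeometry CategoryTheory

namespace Ideal

variable {R : Type*} [CommRing R] [IsNoetherianRing R]

theorem mem_minimalPrimes_span_singleton_of_height_le_one {a : R} (ha : a ∈ nonZeroDivisors R)
    {p : Ideal R} [p.IsPrime] (hap : a ∈ p) (hp : p.height ≤ 1) :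
    p ∈ (span {a}).minimalPrimes :=
  mem_minimalPrimes_of_height_le ((span_singleton_le_iff_mem p).mpr hap)
    (hp.trans (one_le_height_span_singleton_of_mem_nonZeroDivisors ha))

theorem exists_eq_colon_of_mem_minimalPrimes_span_singleton {a : R} {p : Ideal R}
    (hp : p ∈ (span {a}).minimalPrimes) : ∃ t : R, p = (span {a}).colon {t} := by
  have hcolon_one : (span {a}).colon {(1 : R)} = span {a} := by ext; simp
  exact Submodule.exists_eq_colon_of_mem_minimalPrimes (hcolon_one ▸ hp)

end Ideal

namespace AlgebraicGeometry

theorem Scheme.algebraMap_Spec_obj_opensRange_toSpecΓ_surjective (X : Scheme)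
    [IsOpenImmersion X.toSpecΓ] :
    Function.Surjective (algebraMap Γ(X, ⊤) Γ(Spec Γ(X, ⊤), X.toSpecΓ.opensRange)) := by
  set f := X.toSpecΓ
  have hres : (Spec Γ(X, ⊤)).presheaf.map (homOfLE le_top : f ''ᵁ ⊤ ⟶ ⊤).op ≫ (f.appIso ⊤).hom =
      f.appTop := by
    rw [Scheme.Hom.appIso_hom', Scheme.Hom.map_appLE]
    exact f.appLE_eq_app
  have : IsIso f.appTop := by
    rw [Scheme.toSpecΓ_appTop]
    exact (Scheme.ΓSpecIso _).isIso_hom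
  have : IsIso ((Spec Γ(X, ⊤)).presheaf.map (homOfLE le_top : f ''ᵁ ⊤ ⟶ ⊤).op) := by
    rw [← hres] at this
    exact IsIso.of_isIso_comp_right _ (f.appIso ⊤).hom
  rw [← f.image_top_eq_opensRange, IsAffineOpen.algebraMap_Spec_obj, CommRingCat.hom_comp,
    RingHom.coe_comp]
  exact ((ConcreteCategory.bijective_of_isIso _).comp (ConcreteCategory.bijective_of_isIso _)).2

variable {R : CommRingCat}

theorem algebraMap_Spec_obj_injective [IsDomain R] (U : (Spec R).Opens) [Nonempty U] :
    Function.Injective (algebraMap R Γ(Spec R, U)) := by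
  rw [IsAffineOpen.algebraMap_Spec_obj]
  exact (map_injective_of_isIntegral _ _).comp
    (Scheme.ΓSpecIso R).commRingCatIsoToRingEquiv.symm.injective

theorem algebraMap_Spec_obj_dvd_of_forall_not_colon_le {U : (Spec R).Opens} {a t : R}
    (ha : a ∈ nonZeroDivisors R)
    (hU : ∀ x : PrimeSpectrum R, x ∈ U → ¬ (Ideal.span {a}).colon {t} ≤ x.asIdeal) :
    algebraMap R Γ(Spec R, U) a ∣ algebraMap R Γ(Spec R, U) t := by
  have hfrac : ∀ x : U, ∃ c b : R, c ∉ x.1.asIdeal ∧ c * t = a * b := by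
    intro x
    obtain ⟨c, hc, hcx⟩ := SetLike.not_le_iff_exists.mp (hU x.1 x.2)
    obtain ⟨b, hb⟩ := Ideal.mem_span_singleton'.mp (Submodule.mem_colon_singleton.mp hc)
    exact ⟨c, b, hcx, by rw [← smul_eq_mul, ← hb]; ring⟩
  choose c b hc hcb using hfrac
  have hcross : ∀ x y : U, c x * b y = c y * b x := by
    intro x y
    refine (mul_cancel_left_mem_nonZeroDivisors ha).mp ?_
    linear_combination c y * hcb x - c x * hcb y
  let s : ∀ x : U, StructureSheaf.Localizations R x.1 := fun x =>
    LocalizedModule.mk (b x) ⟨c x, hc x⟩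
  have hs : (StructureSheaf.isLocallyFraction R R).pred s := by
    intro x
    refine ⟨U ⊓ PrimeSpectrum.basicOpen (c x), ⟨x.2, hc x⟩, homOfLE inf_le_left, b x, c x,
      fun y => ⟨y.2.2, LocalizedModule.mk_eq.mpr ⟨1, ?_⟩⟩⟩
    simpa [Submonoid.smul_def] using hcross x _
  refine ⟨⟨s, hs⟩, Subtype.ext (funext fun x => ?_)⟩
  exact (LocalizedModule.mk_eq.mpr ⟨1, by simpa [Submonoid.smul_def] using hcb x⟩).trans
    (LocalizedModule.mk_mul_mk ..).symm

theorem mem_span_singleton_of_forall_not_colon_le [IsDomain R] (U : (Spec R).Opens) [Nonempty U]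
    (hU : Function.Surjective (algebraMap R Γ(Spec R, U))) {a t : R} (ha : a ≠ 0)
    (hUt : ∀ x : PrimeSpectrum R, x ∈ U → ¬ (Ideal.span {a}).colon {t} ≤ x.asIdeal) :
    t ∈ Ideal.span {a} := by
  obtain ⟨s, hs⟩ := algebraMap_Spec_obj_dvd_of_forall_not_colon_le
    (mem_nonZeroDivisors_of_ne_zero ha) hUt
  obtain ⟨b, rfl⟩ := hU s
  rw [← map_mul] at hs
  exact Ideal.mem_span_singleton'.mpr ⟨b, by rw [mul_comm, algebraMap_Spec_obj_injective U hs]⟩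

theorem two_le_height_of_algebraMap_Spec_obj_surjective [IsDomain R] [IsNoetherianRing R]
    (U : (Spec R).Opens) [Nonempty U] (hU : Function.Surjective (algebraMap R Γ(Spec R, U)))
    (p : PrimeSpectrum R) (hp : p ∉ U) : 2 ≤ Order.height p := by
  have hpU : ∀ x : PrimeSpectrum R, x ∈ U → ¬ p.asIdeal ≤ x.asIdeal := fun x hx hpx =>
    hp (U.isOpen.stableUnderGeneralization ((PrimeSpectrum.le_iff_specializes p x).mp hpx) hx)
  by_contra! hlt
  have hp_ne_bot : p.asIdeal ≠ ⊥ := by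
    obtain ⟨x, hx⟩ := ‹Nonempty U›
    exact fun h => hpU x hx (h ▸ bot_le)
  obtain ⟨a, hap, ha⟩ := Submodule.exists_mem_ne_zero_of_ne_bot hp_ne_bot
  have hheight : p.asIdeal.height ≤ 1 := by
    rw [PrimeSpectrum.height_eq_orderHeight]
    exact Order.le_of_lt_add_one hlt
  obtain ⟨t, hpt⟩ := Ideal.exists_eq_colon_of_mem_minimalPrimes_span_singleton
    (Ideal.mem_minimalPrimes_span_singleton_of_height_le_one (mem_nonZeroDivisors_of_ne_zero ha)
      hap hheight)
  have ht : t ∈ Ideal.span {a} :=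
    mem_span_singleton_of_forall_not_colon_le U hU ha fun x hx => hpt ▸ hpU x hx
  exact p.isPrime.ne_top (by rwa [hpt, Submodule.colon_eq_top_iff_subset, Set.singleton_subset_iff])

end AlgebraicGeometry

/-- If `Y` is an integral quasi-affine scheme (i.e. the canonical map to the spectrum of its
ring of global functions `B = Γ(Y, ⊤)` is an open immersion) and `B` is Noetherian, then every
prime of `B` lying outside the image of `Y` has height at least two. -/
theorem complement_of_quasiAffine_has_codim_ge_two
    (Y : Scheme.{0}) [IsIntegral Y]
    (hqa : IsOpenImmersion Y.toSpecΓ)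
    (hnoeth : IsNoetherianRing Γ(Y, ⊤))
    (p : PrimeSpectrum Γ(Y, ⊤))
    (hp : p ∉ Set.range Y.toSpecΓ.base) :
    2 ≤ Order.height p := by
  have : Nonempty Y.toSpecΓ.opensRange := ⟨⟨_, Set.mem_range_self (Classical.arbitrary Y)⟩⟩
  exact two_le_height_of_algebraMap_Spec_obj_surjective Y.toSpecΓ.opensRange
    Y.algebraMap_Spec_obj_opensRange_toSpecΓ_surjective p hp
end

section
/- Let d be a positive integer and let v_1, …, v_d ∈ ℚ^d be vectors forming a basis of ℚ^d over ℚ (viewed inside ℝ^d). Let C = { Σ_{i=1}^d α_i v_i : α_i ∈ ℝ, α_i > 0 } be the open cone of strictly positive real combinations of the v_i, and let Z ⊆ ℝ^d be a closed subset which does not contain C and which is closed under multiplication by any positive real scalar (if z ∈ Z and t > 0 then t·z ∈ Z). Then there exist positive integers n_1, …, n_d such that the point Σ_{i=1}^d n_i v_i does not lie in Z. -/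
/-!
The coefficient vectors `β` with `∑ βᵢ vᵢ ∉ Z` form an open set `U` (as `Z` is closed), stable
under positive scaling (as `Z` is), and `U` meets the positive orthant (as `Z ⊉ C`). Rational
points are dense, so `U` contains a positive rational vector `q`; scaling `q` by the product of
the denominators of its entries gives a positive integer vector in `U`.
-/

theorem Rat.exists_pos_nat_eq_mul_of_den_dvd {q : ℚ} (hq : 0 < q) {N : ℕ} (hN : 0 < N)
    (h : q.den ∣ N) : ∃ m : ℕ, 0 < m ∧ (m : ℚ) = N * q := by
  obtain ⟨k, rfl⟩ := h
  have hk : 0 < k := Nat.pos_of_mul_pos_left hN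
  have hnum : 0 < q.num := Rat.num_pos.mpr hq
  refine ⟨k * q.num.toNat, Nat.mul_pos hk (by omega), ?_⟩
  have hnum_cast : ((q.num.toNat : ℕ) : ℚ) = q.num := by
    exact_mod_cast Int.toNat_of_nonneg hnum.le
  rw [Nat.cast_mul, Nat.cast_mul, hnum_cast, ← Rat.den_mul_eq_num]
  ring

theorem exists_pos_nat_mul_eq_pos_nat {ι : Type*} [Fintype ι] {q : ι → ℚ}
    (hq : ∀ i, 0 < q i) :
    ∃ N : ℕ, 0 < N ∧ ∃ m : ι → ℕ, (∀ i, 0 < m i) ∧ ∀ i, (m i : ℚ) = N * q i := by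
  have hN : 0 < ∏ i, (q i).den := Finset.prod_pos fun i _ => (q i).pos
  choose m hm_pos hm using fun i => Rat.exists_pos_nat_eq_mul_of_den_dvd (hq i) hN
    (Finset.dvd_prod_of_mem _ (Finset.mem_univ i))
  exact ⟨_, hN, m, hm_pos, hm⟩

theorem IsOpen.exists_pos_rat_mem {ι : Type*} [Finite ι] {U : Set (ι → ℝ)} (hU : IsOpen U)
    {x : ι → ℝ} (hx : x ∈ U) (hx_pos : ∀ i, 0 < x i) :
    ∃ q : ι → ℚ, (∀ i, 0 < q i) ∧ (fun i => (q i : ℝ)) ∈ U := by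
  have horthant : IsOpen {y : ι → ℝ | ∀ i, 0 < y i} := by
    simpa only [Set.ofPred_forall] using
      isOpen_iInter_of_finite fun i => isOpen_lt continuous_const (continuous_apply i)
  have hdense : DenseRange (Pi.map fun _ : ι => ((↑) : ℚ → ℝ)) :=
    DenseRange.piMap fun _ => Rat.denseRange_cast
  obtain ⟨q, hq_pos, hqU⟩ := hdense.exists_mem_open (horthant.inter hU) ⟨x, hx_pos, hx⟩
  exact ⟨q, fun i => Rat.cast_pos.mp (hq_pos i), hqU⟩

theorem IsOpen.exists_pos_nat_mem_of_smul_mem {ι : Type*} [Fintype ι] {U : Set (ι → ℝ)}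
    (hU : IsOpen U) (hU_smul : ∀ y ∈ U, ∀ t : ℝ, 0 < t → t • y ∈ U)
    {x : ι → ℝ} (hx : x ∈ U) (hx_pos : ∀ i, 0 < x i) :
    ∃ m : ι → ℕ, (∀ i, 0 < m i) ∧ (fun i => (m i : ℝ)) ∈ U := by
  obtain ⟨q, hq_pos, hqU⟩ := hU.exists_pos_rat_mem hx hx_pos
  obtain ⟨N, hN, m, hm_pos, hm⟩ := exists_pos_nat_mul_eq_pos_nat hq_pos
  refine ⟨m, hm_pos, ?_⟩
  convert hU_smul _ hqU N (by exact_mod_cast hN) using 1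
  ext i
  simpa using congrArg ((↑) : ℚ → ℝ) (hm i)

theorem exists_pos_int_comb_not_mem_general
    (d : ℕ) (v : Fin d → (Fin d → ℚ))
    (C : Set (Fin d → ℝ))
    (hC : C = {y | ∃ α : Fin d → ℝ, (∀ i, 0 < α i) ∧
      y = ∑ i, α i • (fun j => ((v i j : ℝ)))})
    (Z : Set (Fin d → ℝ)) (hZclosed : IsClosed Z)
    (hZscale : ∀ z ∈ Z, ∀ t : ℝ, 0 < t → t • z ∈ Z)
    (hZC : ¬ C ⊆ Z) :
    ∃ m : Fin d → ℕ, (∀ i, 0 < m i) ∧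
      (∑ i, (m i : ℝ) • (fun j => ((v i j : ℝ)))) ∉ Z := by
  obtain ⟨y, hyC, hyZ⟩ := Set.not_subset.mp hZC
  obtain ⟨α, hα, rfl⟩ := hC ▸ hyC
  let f := Fintype.linearCombination ℝ fun i j => (v i j : ℝ)
  have hU_smul : ∀ β ∈ f ⁻¹' Zᶜ, ∀ t : ℝ, 0 < t → t • β ∈ f ⁻¹' Zᶜ := by
    intro β hβ t ht htβ
    rw [map_smul] at htβ
    exact hβ (inv_smul_smul₀ ht.ne' (f β) ▸ hZscale _ htβ t⁻¹ (inv_pos.mpr ht))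
  have hU : IsOpen (f ⁻¹' Zᶜ) :=
    hZclosed.isOpen_compl.preimage f.continuous_of_finiteDimensional
  have hα_mem : α ∈ f ⁻¹' Zᶜ := by simpa [f, Fintype.linearCombination_apply] using hyZ
  obtain ⟨m, hm_pos, hm⟩ := hU.exists_pos_nat_mem_of_smul_mem hU_smul hα_mem hα
  exact ⟨m, hm_pos, by simpa [f, Fintype.linearCombination_apply] using hm⟩

/-- If `v₁, …, v_d` is a `ℚ`-basis of `ℚ^d` (viewed inside `ℝ^d`), `C` is the open cone of
strictly positive real combinations of the `vᵢ`, and `Z ⊆ ℝ^d` is a closed subset stable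
under positive scaling which does not contain `C`, then some strictly positive integer
combination of the `vᵢ` lies outside `Z`. -/
theorem exists_pos_int_comb_not_mem
    (d : ℕ) (hd : 0 < d) (v : Fin d → (Fin d → ℚ))
    (hv : LinearIndependent ℚ v)
    (hspan : Submodule.span ℚ (Set.range v) = ⊤)
    (C : Set (Fin d → ℝ))
    (hC : C = {y | ∃ α : Fin d → ℝ, (∀ i, 0 < α i) ∧
      y = ∑ i, α i • (fun j => ((v i j : ℝ)))})
    (Z : Set (Fin d → ℝ)) (hZclosed : IsClosed Z)
    (hZscale : ∀ z ∈ Z, ∀ t : ℝ, 0 < t → t • z ∈ Z)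
    (hZC : ¬ C ⊆ Z) :
    ∃ m : Fin d → ℕ, (∀ i, 0 < m i) ∧
      (∑ i, (m i : ℝ) • (fun j => ((v i j : ℝ)))) ∉ Z :=
  exists_pos_int_comb_not_mem_general d v C hC Z hZclosed hZscale hZC
end
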